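/- The ratio G(ω) = F₂(ω)/F₁(ω) = (√2/3) · ((1 + ω²)/ω) · tanh(πω/2) is strictly monotonically increasing for ω ≥ 1, and G(ω)/ω → √2/3 as ω → ∞ (asymptotic linear growth). -/

import Mathlib

open Real Filter

lemma tanh_eq' (x : ℝ) : Real.tanh x = 1 - 2 / (Real.exp (2*x) + 1) := by
  rw [Real.tanh_eq_sinh_div_cosh, Real.sinh_eq, Real.cosh_eq]
  have h1 : Real.exp x > 0 := Real.exp_pos x
  have h2 : Real.exp (-x) > 0 := Real.exp_pos _
  have h3 : Real.exp (2*x) = Real.exp x * Real.exp x := by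
    rw [← Real.exp_add]; ring_nf
  have h4 : Real.exp x * Real.exp (-x) = 1 := by
    rw [← Real.exp_add]; simp
  field_simp
  rw [mul_comm x 2, h3]; linear_combination (-2 * Real.exp x) * h4

lemma tanh_strictMono : StrictMono Real.tanh := by
  intro a b hab
  rw [tanh_eq', tanh_eq']
  have h1 : (0:ℝ) < Real.exp (2*a) + 1 := by positivity
  have h2 : Real.exp (2*a) < Real.exp (2*b) := Real.exp_lt_exp.2 (by linarith)
  have : 2 / (Real.exp (2*b) + 1) < 2 / (Real.exp (2*a) + 1) := by
    apply div_lt_div_of_pos_left (by norm_num) h1 (by linarith)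
  linarith

lemma tanh_pos_of_pos {x : ℝ} (hx : 0 < x) : 0 < Real.tanh x := by
  have := tanh_strictMono hx
  simpa [Real.tanh_zero] using this

lemma tanh_tendsto_one : Tendsto Real.tanh atTop (nhds 1) := by
  have h : Tendsto (fun x : ℝ => 1 - 2 / (Real.exp (2*x) + 1)) atTop (nhds (1 - 0)) := by
    apply Tendsto.const_sub
    apply Tendsto.div_atTop tendsto_const_nhds
    apply Tendsto.atTop_add _ tendsto_const_nhds
    exact Real.tendsto_exp_atTop.comp (tendsto_id.const_mul_atTop (by norm_num))
  simp only [sub_zero] at h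
  exact h.congr (fun x => (tanh_eq' x).symm)

theorem melnikov_ratio_monotone_and_asymptotically_linear
    (G : ℝ → ℝ)
    (hG : ∀ ω, G ω = Real.sqrt 2 / 3 * ((1 + ω^2) / ω) * Real.tanh (Real.pi * ω / 2)) :
    StrictMonoOn G (Set.Ici 1) ∧
    Filter.Tendsto (fun ω => G ω / ω) Filter.atTop (nhds (Real.sqrt 2 / 3)) := by
  have hc : (0:ℝ) < Real.sqrt 2 / 3 := by positivity
  constructor
  · intro a ha b hb hab
    simp only [Set.mem_Ici] at ha hb
    rw [hG a, hG b]
    have ha0 : (0:ℝ) < a := by linarith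
    have hb0 : (0:ℝ) < b := by linarith
    have hh : (1 + a^2) / a < (1 + b^2) / b := by
      rw [div_lt_div_iff₀ ha0 hb0]
      nlinarith [mul_pos (sub_pos.2 hab) (by nlinarith : (0:ℝ) < a*b - 1)]
    have hta : 0 < Real.tanh (Real.pi * a / 2) :=
      tanh_pos_of_pos (by positivity : (0:ℝ) < Real.pi * a / 2)
    have htab : Real.tanh (Real.pi * a / 2) < Real.tanh (Real.pi * b / 2) := by
      apply tanh_strictMono
      have := Real.pi_pos
      nlinarith
    have hhb : (0:ℝ) < (1 + b^2) / b := by positivity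
    have : (1 + a^2) / a * Real.tanh (Real.pi * a / 2)
        < (1 + b^2) / b * Real.tanh (Real.pi * b / 2) :=
      mul_lt_mul hh htab.le hta hhb.le
    calc Real.sqrt 2 / 3 * ((1 + a^2) / a) * Real.tanh (Real.pi * a / 2)
        = Real.sqrt 2 / 3 * ((1 + a^2) / a * Real.tanh (Real.pi * a / 2)) := by ring
      _ < Real.sqrt 2 / 3 * ((1 + b^2) / b * Real.tanh (Real.pi * b / 2)) :=
          (mul_lt_mul_iff_right₀ hc).2 this
      _ = Real.sqrt 2 / 3 * ((1 + b^2) / b) * Real.tanh (Real.pi * b / 2) := by ring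
  · have h1 : Tendsto (fun ω : ℝ => (1 + ω^2) / ω^2) atTop (nhds 1) := by
      have : Tendsto (fun ω : ℝ => 1 / ω^2 + 1) atTop (nhds (0 + 1)) := by
        apply Tendsto.add_const
        apply Tendsto.div_atTop tendsto_const_nhds
        exact tendsto_pow_atTop (by norm_num)
      rw [zero_add] at this
      apply this.congr'
      filter_upwards [eventually_gt_atTop (0:ℝ)] with ω hω
      field_simp
    have h2 : Tendsto (fun ω : ℝ => Real.tanh (Real.pi * ω / 2)) atTop (nhds 1) := by
      apply tanh_tendsto_one.comp
      apply Tendsto.atTop_div_const (by norm_num)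
      exact tendsto_id.const_mul_atTop Real.pi_pos
    have h3 : Tendsto (fun ω : ℝ => Real.sqrt 2 / 3 * ((1 + ω^2) / ω^2) *
        Real.tanh (Real.pi * ω / 2)) atTop (nhds (Real.sqrt 2 / 3 * 1 * 1)) :=
      (tendsto_const_nhds.mul h1).mul h2
    rw [mul_one, mul_one] at h3
    apply h3.congr'
    filter_upwards [eventually_gt_atTop (0:ℝ)] with ω hω
    have he : (1 + ω^2) / ω^2 = ((1 + ω^2) / ω) / ω := by
      rw [div_div, sq]
    rw [hG ω, he]
    ring
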